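/- arXiv:1608.02727 — 4 statements merged into one kernel-verified Lean document; each statement's English description precedes it below -/
import Mathlib

section
/- Let p be a prime and G a finite group such that p divides the order of G, the Sylow p-subgroups of G are not normal, any two distinct Sylow p-subgroups of G intersect in the trivial subgroup, and every nontrivial normal subgroup of G has order divisible by p (i.e. O_{p'}(G) = 1). Then G has a unique minimal normal subgroup S, and S is a nonabelian simple group. -/
/-!
If a subgroup `H` normalizes a TI Sylow subgroup `Q` and contains an element `x` of order `p`,
then so does the normalizer of `H`: for `g` normalizing `H`, the `p`-elements `x` and `g⁻¹ x g`
of `H` lie in `Q`, so `x ∈ Q ∩ g • Q` and `g • Q = Q`. Let `K ⊴ S ⊴ G` with `K` containing an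
element of order `p`, centralized by some `y` of order `p` lying in `Q`. Climbing
`K ≤ C(y) ≤ N(⟨y⟩)`, then `S ≤ N(K)`, then `G = N(S)`, we get that `Q` is normal in `G`, which is
excluded.

With `K = S` a minimal normal subgroup this shows that `S` is nonabelian and that no other minimal
normal subgroup exists, as it would commute with `S`. If `S` were not simple, a minimal normal
subgroup of `S` and one of its `G`-conjugates would be commuting normal subgroups of `S`; both have
order divisible by `p`, because the largest normal `p'`-subgroup of `S` is characteristic in `S`,
hence normal in `G`, hence trivial.
-/

open Subgroup

def Subgroup.IsMinimalNormal {G : Type*} [Group G] (S : Subgroup G) : Prop :=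
  S.Normal ∧ S ≠ ⊥ ∧ ∀ T : Subgroup G, T.Normal → T ≠ ⊥ → T ≤ S → T = S

def SylowTI (p : ℕ) (G : Type*) [Group G] : Prop :=
  ∀ P Q : Sylow p G, P ≠ Q → (P : Subgroup G) ⊓ (Q : Subgroup G) = ⊥

namespace Subgroup

variable {G : Type*} [Group G]

theorem exists_isMinimalNormal_le [Finite G] {N : Subgroup G} (hN : N.Normal) (hN₀ : N ≠ ⊥) :
    ∃ M ≤ N, M.IsMinimalNormal := by
  obtain ⟨M, hMN, ⟨hM, hM₀⟩, hmin⟩ :=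
    Finite.exists_le_minimal (p := fun M : Subgroup G => M.Normal ∧ M ≠ ⊥) ⟨hN, hN₀⟩
  exact ⟨M, hMN, hM, hM₀, fun T hT hT₀ hTM => le_antisymm hTM (hmin ⟨hT, hT₀⟩ hTM)⟩

theorem IsMinimalNormal.disjoint_of_ne {S S' : Subgroup G} (hS : S.IsMinimalNormal)
    (hS' : S'.IsMinimalNormal) (hne : S ≠ S') : Disjoint S S' := by
  have := hS.1
  have := hS'.1
  rw [disjoint_iff]
  by_contra h
  exact hne ((hS.2.2 _ inferInstance h inf_le_left).symm.trans
    (hS'.2.2 _ inferInstance h inf_le_right))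

theorem map_subtype_normal_of_forall_map_conjNormal_eq {S : Subgroup G} [S.Normal]
    {K : Subgroup S} (hK : ∀ g : G, K.map (MulAut.conjNormal g).toMonoidHom = K) :
    (K.map S.subtype).Normal := by
  refine ⟨?_⟩
  rintro _ ⟨k, hk, rfl⟩ g
  have hgk : MulAut.conjNormal g k ∈ K := hK g ▸ mem_map_of_mem _ hk
  exact (MulAut.conjNormal_apply g k) ▸ mem_map_of_mem S.subtype hgk

theorem IsMinimalNormal.exists_disjoint_of_ne_top [Finite G] {S : Subgroup G}
    (hS : S.IsMinimalNormal) {N : Subgroup S} (hN : N.Normal) (hN₀ : N ≠ ⊥) (hN₁ : N ≠ ⊤) :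
    ∃ K L : Subgroup S, K.Normal ∧ L.Normal ∧ K ≠ ⊥ ∧ L ≠ ⊥ ∧ Disjoint K L := by
  have := hS.1
  obtain ⟨K, hKN, ⟨hK, hK₀⟩, hmin⟩ :=
    Finite.exists_le_minimal (p := fun K : Subgroup S => K.Normal ∧ K ≠ ⊥) ⟨hN, hN₀⟩
  obtain ⟨g, hg⟩ : ∃ g : G, K.map (MulAut.conjNormal g).toMonoidHom ≠ K := by
    by_contra! hfix
    have hKS : K.map S.subtype = S :=
      hS.2.2 _ (map_subtype_normal_of_forall_map_conjNormal_eq hfix)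
        ((map_eq_bot_iff_of_injective _ S.subtype_injective).not.mpr hK₀) (map_subtype_le K)
    refine hN₁ (top_le_iff.mp (le_trans (fun x _ => ?_) hKN))
    obtain ⟨k, hk, hkx⟩ : (x : G) ∈ K.map S.subtype := by rw [hKS]; exact x.2
    exact Subtype.ext hkx ▸ hk
  set L := K.map (MulAut.conjNormal g).toMonoidHom
  have hL : L.Normal := hK.map _ (MulEquiv.surjective _)
  refine ⟨K, L, hK, hL, hK₀,
    (map_eq_bot_iff_of_injective _ (MulEquiv.injective _)).not.mpr hK₀, disjoint_iff.mpr ?_⟩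
  by_contra hKL
  have hKL : K ≤ L := (hmin ⟨normal_inf_normal K L, hKL⟩ inf_le_left).trans inf_le_right
  exact hg (eq_of_le_of_card_ge hKL (card_map_of_injective (MulEquiv.injective _)).le).symm

end Subgroup

section CoprimeNormal

variable {p : ℕ} [Fact p.Prime] {G : Type*} [Group G]

theorem Subgroup.not_dvd_card_sup {H K : Subgroup G} [K.Normal] (hH : ¬ p ∣ Nat.card H)
    (hK : ¬ p ∣ Nat.card K) : ¬ p ∣ Nat.card ↥(H ⊔ K) := by
  have hcard : Nat.card ↥(H ⊔ K) = Nat.card K * K.relIndex H := by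
    rw [← relIndex_sup_right, ← relIndex_bot_left, ← relIndex_bot_left,
      relIndex_mul_relIndex _ _ _ bot_le le_sup_right]
  rw [hcard, Nat.Prime.dvd_mul Fact.out, not_or]
  exact ⟨hK, fun h => hH (h.trans (relIndex_dvd_card K H))⟩

theorem Subgroup.exists_characteristic_ge_not_dvd_card [Finite G] {K : Subgroup G} [hK : K.Normal]
    (hKp : ¬ p ∣ Nat.card K) : ∃ O : Subgroup G, O.Characteristic ∧ K ≤ O ∧ ¬ p ∣ Nat.card O := by
  obtain ⟨O, hKO, ⟨hO, hOp⟩, hmax⟩ :=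
    Finite.exists_le_maximal (p := fun N : Subgroup G => N.Normal ∧ ¬ p ∣ Nat.card N) ⟨hK, hKp⟩
  refine ⟨O, characteristic_iff_map_le.mpr fun φ => ?_, hKO, hOp⟩
  have hφO : (O.map φ.toMonoidHom).Normal := hO.map _ φ.surjective
  have hφOp : ¬ p ∣ Nat.card (O.map φ.toMonoidHom) := by
    rwa [card_map_of_injective φ.injective]
  exact le_sup_right.trans (hmax ⟨sup_normal _ _, not_dvd_card_sup hOp hφOp⟩ le_sup_left)

theorem Subgroup.dvd_card_of_normal_of_ne_bot [Finite G]
    (hOp' : ∀ N : Subgroup G, N.Normal → N ≠ ⊥ → p ∣ Nat.card N) {S : Subgroup G} [S.Normal]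
    {K : Subgroup S} [K.Normal] (hK₀ : K ≠ ⊥) : p ∣ Nat.card K := by
  by_contra hKp
  obtain ⟨O, hO, hKO, hOp⟩ := exists_characteristic_ge_not_dvd_card hKp
  have hO₀ : O.map S.subtype ≠ ⊥ :=
    (map_eq_bot_iff_of_injective _ S.subtype_injective).not.mpr (ne_bot_of_le_ne_bot hK₀ hKO)
  exact hOp (card_map_of_injective S.subtype_injective ▸ hOp' _ inferInstance hO₀)

end CoprimeNormal

section TI

variable {p : ℕ} {G : Type*} [Group G]

theorem IsPGroup.le_of_le_normalizer {P : Subgroup G} (hP : IsPGroup p P) {Q : Sylow p G}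
    (h : P ≤ normalizer (Q : Set G)) : P ≤ Q := by
  rw [← inf_eq_left, ← hP.inf_normalizer_sylow, inf_eq_left.mpr h]

theorem isPGroup_zpowers_of_orderOf_eq {x : G} (hx : orderOf x = p) : IsPGroup p (zpowers x) :=
  IsPGroup.of_card (n := 1) (by rw [Nat.card_zpowers, hx, pow_one])

namespace SylowTI

theorem eq_of_mem (hTI : SylowTI p G) {P Q : Sylow p G} {x : G} (hx : x ≠ 1) (hP : x ∈ P)
    (hQ : x ∈ Q) : P = Q := by
  by_contra hne
  exact hx ((eq_bot_iff_forall _).mp (hTI P Q hne) x ⟨hP, hQ⟩)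

variable [Fact p.Prime]

theorem normalizer_le_normalizer (hTI : SylowTI p G) {Q : Sylow p G} {H : Subgroup G}
    (hHQ : H ≤ normalizer (Q : Set G)) {x : G} (hxH : x ∈ H) (hx : orderOf x = p) :
    normalizer (H : Set G) ≤ normalizer (Q : Set G) := by
  have mem_Q : ∀ z ∈ H, orderOf z = p → z ∈ Q := fun z hz hzp =>
    (isPGroup_zpowers_of_orderOf_eq hzp).le_of_le_normalizer ((zpowers_le.mpr hz).trans hHQ)
      (mem_zpowers z)
  have hx₁ : x ≠ 1 := fun h => (Fact.out : p.Prime).ne_one (by rw [← hx, h, orderOf_one])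
  intro g hg
  rw [← Sylow.smul_eq_iff_mem_normalizer]
  refine hTI.eq_of_mem hx₁ ?_ (mem_Q x hxH hx)
  have hconj : g⁻¹ * x * g ∈ H := by
    simpa using (mem_normalizer_iff.mp (inv_mem hg) x).mp hxH
  rw [← SetLike.mem_coe, Sylow.coe_smul, Set.mem_smul_set_iff_inv_smul_mem]
  simpa using mem_Q _ hconj (by simpa [hx] using (MulAut.conj g⁻¹).orderOf_eq x)

theorem not_forall_commute (hTI : SylowTI p G) (hnn : ∀ P : Sylow p G, ¬ (P : Subgroup G).Normal)
    {S : Subgroup G} [hS : S.Normal] {K : Subgroup S} [K.Normal] {x : S} (hxK : x ∈ K)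
    (hx : orderOf x = p) {y : G} (hy : orderOf y = p) : ¬ ∀ k ∈ K, Commute (k : G) y := by
  intro hKy
  obtain ⟨Q, hyQ⟩ := (isPGroup_zpowers_of_orderOf_eq hy).exists_le_sylow
  have hKQ : K.map S.subtype ≤ normalizer (Q : Set G) := by
    calc K.map S.subtype ≤ centralizer (zpowers y : Set G) := by
          rintro _ ⟨k, hk, rfl⟩ _ ⟨n, rfl⟩
          exact ((hKy k hk).zpow_right n).eq.symm
      _ ≤ normalizer (zpowers y : Set G) := centralizer_le_normalizer _
      _ ≤ normalizer (Q : Set G) :=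
          hTI.normalizer_le_normalizer (hyQ.trans le_normalizer) (mem_zpowers y) hy
  have hSK : S ≤ normalizer (K.map S.subtype : Set G) := by
    simpa [normalizer_eq_top_iff.mpr ‹K.Normal›, ← MonoidHom.range_eq_map] using
      le_normalizer_map (H := K) S.subtype
  have hSQ : S ≤ normalizer (Q : Set G) :=
    hSK.trans
      (hTI.normalizer_le_normalizer hKQ (mem_map_of_mem _ hxK) (by rwa [coe_subtype, orderOf_coe]))
  refine hnn Q (normalizer_eq_top_iff.mp (top_le_iff.mp ?_))
  rw [← normalizer_eq_top_iff.mpr hS]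
  exact hTI.normalizer_le_normalizer hSQ x.2 (by rwa [orderOf_coe])

theorem not_commutative_of_isMinimalNormal [Finite G] (hTI : SylowTI p G)
    (hnn : ∀ P : Sylow p G, ¬ (P : Subgroup G).Normal) {S : Subgroup G} (hS : S.IsMinimalNormal)
    (hpS : p ∣ Nat.card S) : ¬ ∀ a b : S, a * b = b * a := by
  have := hS.1
  obtain ⟨x, hx⟩ := exists_prime_orderOf_dvd_card' p hpS
  exact fun hcomm => hTI.not_forall_commute hnn (mem_top x) hx (by rwa [orderOf_coe])
    fun k _ => congrArg Subtype.val (hcomm k x)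

theorem eq_of_isMinimalNormal [Finite G] (hTI : SylowTI p G)
    (hnn : ∀ P : Sylow p G, ¬ (P : Subgroup G).Normal) {S S' : Subgroup G}
    (hS : S.IsMinimalNormal) (hS' : S'.IsMinimalNormal) (hpS : p ∣ Nat.card S)
    (hpS' : p ∣ Nat.card S') : S' = S := by
  have := hS.1
  obtain ⟨x, hx⟩ := exists_prime_orderOf_dvd_card' p hpS
  obtain ⟨y, hy⟩ := exists_prime_orderOf_dvd_card' p hpS'
  by_contra hne
  exact hTI.not_forall_commute hnn (mem_top x) hx (by rwa [orderOf_coe]) fun a _ =>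
    commute_of_normal_of_disjoint S S' hS.1 hS'.1 (hS.disjoint_of_ne hS' (Ne.symm hne)) _ _
      a.2 y.2

theorem isSimpleGroup_of_isMinimalNormal [Finite G] (hTI : SylowTI p G)
    (hnn : ∀ P : Sylow p G, ¬ (P : Subgroup G).Normal)
    (hOp' : ∀ N : Subgroup G, N.Normal → N ≠ ⊥ → p ∣ Nat.card N) {S : Subgroup G}
    (hS : S.IsMinimalNormal) : IsSimpleGroup S := by
  have := hS.1
  have : Nontrivial S := (nontrivial_iff_ne_bot S).mpr hS.2.1
  refine ⟨fun N hN => or_iff_not_imp_left.mpr fun hN₀ => by_contra fun hN₁ => ?_⟩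
  obtain ⟨K, L, hK, hL, hK₀, hL₀, hKL⟩ := hS.exists_disjoint_of_ne_top hN hN₀ hN₁
  obtain ⟨k, hk⟩ := exists_prime_orderOf_dvd_card' p (dvd_card_of_normal_of_ne_bot hOp' hK₀)
  obtain ⟨l, hl⟩ := exists_prime_orderOf_dvd_card' p (dvd_card_of_normal_of_ne_bot hOp' hL₀)
  exact hTI.not_forall_commute hnn k.2 (by rwa [orderOf_coe]) (by simpa using hl) fun a ha =>
    (commute_of_normal_of_disjoint K L hK hL hKL a l ha l.2).map S.subtype

end SylowTI

end TI

theorem unique_minimal_normal_of_TI_general (p : ℕ) [Fact p.Prime] (G : Type) [Group G] [Finite G]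
    (hnotnormal : ∀ P : Sylow p G, ¬ (P : Subgroup G).Normal)
    (hTI : ∀ P Q : Sylow p G, P ≠ Q → (P : Subgroup G) ⊓ (Q : Subgroup G) = ⊥)
    (hOp' : ∀ N : Subgroup G, N.Normal → N ≠ ⊥ → p ∣ Nat.card N) :
    ∃ S : Subgroup G,
      (S.Normal ∧ S ≠ ⊥ ∧
        ∀ T : Subgroup G, T.Normal → T ≠ ⊥ → T ≤ S → T = S) ∧
      (¬ ∀ a b : S, a * b = b * a) ∧ IsSimpleGroup S ∧
      (∀ S' : Subgroup G,
        (S'.Normal ∧ S' ≠ ⊥ ∧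
          ∀ T : Subgroup G, T.Normal → T ≠ ⊥ → T ≤ S' → T = S') → S' = S) := by
  have hTI : SylowTI p G := hTI
  have htop : (⊤ : Subgroup G) ≠ ⊥ := fun h => hnotnormal default <| by
    rw [le_bot_iff.mp (h ▸ le_top : ((default : Sylow p G) : Subgroup G) ≤ ⊥)]
    infer_instance
  obtain ⟨S, -, hS⟩ := exists_isMinimalNormal_le normal_top htop
  have hpS := hOp' S hS.1 hS.2.1
  refine ⟨S, hS, hTI.not_commutative_of_isMinimalNormal hnotnormal hS hpS,
    hTI.isSimpleGroup_of_isMinimalNormal hnotnormal hOp' hS, fun S' hS' => ?_⟩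
  exact hTI.eq_of_isMinimalNormal hnotnormal hS hS' hpS (hOp' S' hS'.1 hS'.2.1)

/-- Let `p` be a prime and `G` a finite group with `p ∣ |G|`, non-normal,
trivial intersection Sylow `p`-subgroups, and `O_{p'}(G) = 1` (every nontrivial
normal subgroup has order divisible by `p`). Then `G` has a unique minimal normal
subgroup `S`, and `S` is a nonabelian simple group. -/
theorem unique_minimal_normal_of_TI (p : ℕ) [Fact p.Prime] (G : Type) [Group G] [Finite G]
    (hdvd : p ∣ Nat.card G)
    (hnotnormal : ∀ P : Sylow p G, ¬ (P : Subgroup G).Normal)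
    (hTI : ∀ P Q : Sylow p G, P ≠ Q → (P : Subgroup G) ⊓ (Q : Subgroup G) = ⊥)
    (hOp' : ∀ N : Subgroup G, N.Normal → N ≠ ⊥ → p ∣ Nat.card N) :
    ∃ S : Subgroup G,
      (S.Normal ∧ S ≠ ⊥ ∧
        ∀ T : Subgroup G, T.Normal → T ≠ ⊥ → T ≤ S → T = S) ∧
      (¬ ∀ a b : S, a * b = b * a) ∧ IsSimpleGroup S ∧
      (∀ S' : Subgroup G,
        (S'.Normal ∧ S' ≠ ⊥ ∧
          ∀ T : Subgroup G, T.Normal → T ≠ ⊥ → T ≤ S' → T = S') → S' = S) :=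
  unique_minimal_normal_of_TI_general p G hnotnormal hTI hOp'
end

section
/- Let p be a prime and G a finite group such that p divides the order of G, the Sylow p-subgroups of G are not normal, any two distinct Sylow p-subgroups of G intersect in the trivial subgroup, and every nontrivial normal subgroup of G has order divisible by p (i.e. O_{p'}(G) = 1). Let S be the unique minimal normal subgroup of G. Then the centralizer C_G(S) is trivial, so the conjugation action gives an injective homomorphism from G into the automorphism group of S; moreover S itself has non-normal Sylow p-subgroups any two distinct of which intersect trivially. -/
/-!
A Sylow subgroup of `S` that is normal in `S` is characteristic in `S`, hence normal in `G`;
under the TI hypothesis the only normal `p`-subgroup of `G` is trivial, while `p ∣ |S|`.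
So the Sylow subgroups of `S` are not normal, and in particular `S` is nonabelian. The
centralizer `C_G(S)` is normal in `G`, so if it were nontrivial it would contain a minimal
normal subgroup, which must be `S`, making `S` abelian. Finally every Sylow subgroup of a
subgroup `H ≤ G` is cut out of a Sylow subgroup of `G`, so TI passes from `G` to `H`.
-/

open Subgroup

def HasTISylow (p : ℕ) (G : Type*) [Group G] : Prop :=
  ∀ P Q : Sylow p G, P ≠ Q → (P : Subgroup G) ⊓ (Q : Subgroup G) = ⊥

section

variable {G : Type*} [Group G]

theorem HasTISylow.subgroup {p : ℕ} (hTI : HasTISylow p G) (H : Subgroup G) :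
    HasTISylow p H := by
  intro P Q hPQ
  obtain ⟨P', hP'⟩ := P.exists_comap_subtype_eq
  obtain ⟨Q', hQ'⟩ := Q.exists_comap_subtype_eq
  have hne : P' ≠ Q' := by
    rintro rfl
    exact hPQ (Sylow.ext (hP'.symm.trans hQ'))
  rw [← hP', ← hQ', ← comap_inf, hTI P' Q' hne, MonoidHom.comap_bot, ker_subtype]

theorem IsPGroup.eq_bot_of_hasTISylow {p : ℕ} (hTI : HasTISylow p G) (P : Sylow p G)
    (hP : ¬ (P : Subgroup G).Normal) {N : Subgroup G} [N.Normal] (hN : IsPGroup p N) :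
    N = ⊥ := by
  obtain ⟨Q, hQP⟩ : ∃ Q : Sylow p G, Q ≠ P := by
    by_contra! h
    have : Subsingleton (Sylow p G) := ⟨fun Q R => (h Q).trans (h R).symm⟩
    exact hP (Sylow.normal_of_subsingleton P)
  rw [eq_bot_iff, ← hTI Q P hQP]
  exact le_inf (hN.le_sylow_of_normal Q) (hN.le_sylow_of_normal P)

theorem Sylow.not_normal_of_hasTISylow {p : ℕ} [Fact p.Prime] [Finite G]
    (hTI : HasTISylow p G) (P₀ : Sylow p G) (hP₀ : ¬ (P₀ : Subgroup G).Normal)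
    {S : Subgroup G} [S.Normal] (hpS : p ∣ Nat.card S) (P : Sylow p S) :
    ¬ (P : Subgroup S).Normal := by
  intro hP
  have : (P : Subgroup S).Characteristic := P.characteristic_of_normal hP
  have hbot := (P.2.map S.subtype).eq_bot_of_hasTISylow hTI P₀ hP₀
  exact P.ne_bot_of_dvd_card hpS ((map_eq_bot_iff_of_injective _ S.subtype_injective).mp hbot)

theorem centralizer_eq_bot_of_forall_minimal_eq [Finite G] {S : Subgroup G} [S.Normal]
    (hS : ∀ T, Minimal (fun T : Subgroup G => T.Normal ∧ T ≠ ⊥) T → T = S)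
    (hnc : ¬ IsMulCommutative S) : centralizer (S : Set G) = ⊥ := by
  by_contra hC
  obtain ⟨T, hTC, hT⟩ := exists_minimal_le_of_wellFoundedLT
    (fun T : Subgroup G => T.Normal ∧ T ≠ ⊥) (centralizer (S : Set G)) ⟨inferInstance, hC⟩
  exact hnc (le_centralizer_iff_isMulCommutative.mp (hS T hT ▸ hTC))

theorem MulAut.ker_conjNormal {H : Subgroup G} [H.Normal] :
    (MulAut.conjNormal : G →* MulAut H).ker = centralizer (H : Set G) := by
  ext g
  simp only [MonoidHom.mem_ker, MulEquiv.ext_iff, Subtype.ext_iff, MulAut.conjNormal_apply,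
    MulAut.one_apply, mem_centralizer_iff, Subtype.forall, mul_inv_eq_iff_eq_mul, SetLike.mem_coe]
  exact forall₂_congr fun _ _ => eq_comm

end

theorem minimal_normal_embeds_in_aut_general (p : ℕ) [Fact p.Prime] (G : Type) [Group G] [Finite G]
    (hnotnormal : ∀ P : Sylow p G, ¬ (P : Subgroup G).Normal)
    (hTI : ∀ P Q : Sylow p G, P ≠ Q → (P : Subgroup G) ⊓ (Q : Subgroup G) = ⊥)
    (hOp' : ∀ N : Subgroup G, N.Normal → N ≠ ⊥ → p ∣ Nat.card N)
    (S : Subgroup G) [S.Normal] (hSbot : S ≠ ⊥)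
    (hSuniq : ∀ S' : Subgroup G, S'.Normal → S' ≠ ⊥ →
      (∀ T : Subgroup G, T.Normal → T ≠ ⊥ → T ≤ S' → T = S') → S' = S) :
    Subgroup.centralizer (S : Set G) = ⊥ ∧
    Function.Injective (MulAut.conjNormal : G →* MulAut S) ∧
    (∀ P : Sylow p S, ¬ (P : Subgroup S).Normal) ∧
    (∀ P Q : Sylow p S, P ≠ Q → (P : Subgroup S) ⊓ (Q : Subgroup S) = ⊥) := by
  obtain ⟨P₀⟩ : Nonempty (Sylow p G) := inferInstance
  have hSylS : ∀ P : Sylow p S, ¬ (P : Subgroup S).Normal :=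
    Sylow.not_normal_of_hasTISylow hTI P₀ (hnotnormal P₀) (hOp' S ‹_› hSbot)
  have hcent : centralizer (S : Set G) = ⊥ := by
    refine centralizer_eq_bot_of_forall_minimal_eq
      (fun T hT => hSuniq T hT.1.1 hT.1.2 fun T' hT' hT'bot hle => hT.eq_of_le ⟨hT', hT'bot⟩ hle)
      fun hcomm => ?_
    obtain ⟨P⟩ : Nonempty (Sylow p S) := inferInstance
    exact hSylS P (normal_of_isMulCommutative _)
  exact ⟨hcent, (MonoidHom.ker_eq_bot_iff _).mp (MulAut.ker_conjNormal.trans hcent), hSylS,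
    HasTISylow.subgroup hTI S⟩

/-- Under the hypotheses of Eaton's lemma (trivial intersection, non-normal Sylow
`p`-subgroups, `O_{p'}(G) = 1`), if `S` is the (unique) minimal normal subgroup of `G`,
then `C_G(S) = 1`, so conjugation gives an injective homomorphism `G → Aut(S)`;
moreover `S` itself has non-normal Sylow `p`-subgroups, any two distinct of which
intersect trivially. -/
theorem minimal_normal_embeds_in_aut (p : ℕ) [Fact p.Prime] (G : Type) [Group G] [Finite G]
    (hdvd : p ∣ Nat.card G)
    (hnotnormal : ∀ P : Sylow p G, ¬ (P : Subgroup G).Normal)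
    (hTI : ∀ P Q : Sylow p G, P ≠ Q → (P : Subgroup G) ⊓ (Q : Subgroup G) = ⊥)
    (hOp' : ∀ N : Subgroup G, N.Normal → N ≠ ⊥ → p ∣ Nat.card N)
    (S : Subgroup G) [S.Normal] (hSbot : S ≠ ⊥)
    (hSmin : ∀ T : Subgroup G, T.Normal → T ≠ ⊥ → T ≤ S → T = S)
    (hSuniq : ∀ S' : Subgroup G, S'.Normal → S' ≠ ⊥ →
      (∀ T : Subgroup G, T.Normal → T ≠ ⊥ → T ≤ S' → T = S') → S' = S) :
    Subgroup.centralizer (S : Set G) = ⊥ ∧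
    Function.Injective (MulAut.conjNormal : G →* MulAut S) ∧
    (∀ P : Sylow p S, ¬ (P : Subgroup S).Normal) ∧
    (∀ P Q : Sylow p S, P ≠ Q → (P : Subgroup S) ⊓ (Q : Subgroup S) = ⊥) :=
  minimal_normal_embeds_in_aut_general p G hnotnormal hTI hOp' S hSbot hSuniq
end

section
/- Let k be a commutative ring and let A and B be k-algebras that are Morita equivalent, i.e. there is a k-linear equivalence between the category of (left) A-modules and the category of (left) B-modules. Then the centres Z(A) and Z(B) are isomorphic as k-algebras. -/
open CategoryTheory

universe u

section

variable (k : Type u) [CommRing k] (A : Type u) [Ring A] [Algebra k A]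

/-- The `k`-module structure on an `A`-module `M`, for `A` an algebra over a
commutative ring `k` (restriction of scalars along `k → A`). -/
def moduleOfAlgebraModule' (M : ModuleCat.{u} A) : Module k M :=
  RestrictScalars.module k A M

attribute [instance] moduleOfAlgebraModule'

theorem isScalarTower_of_algebra_moduleCat' (M : ModuleCat.{u} A) : IsScalarTower k A M :=
  RestrictScalars.isScalarTower k A M

attribute [instance] isScalarTower_of_algebra_moduleCat'

/-- The category of `A`-modules is a `k`-linear category, for `A` an algebra over the
commutative ring `k`. -/
instance linearOverCommRing : Linear k (ModuleCat.{u} A) where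
  homModule _ _ := inferInstance

end

/-!
The centre of `A` is the centre `End (𝟭 (ModuleCat A))` of its module category: a central `z`
acts on every module by `m ↦ z • m`, and conversely a natural endomorphism `η` of the identity is
multiplication by `η_A(1)`, by naturality along the maps `A → M`, `a ↦ a • m`. The centre of a
category is invariant under `k`-linear equivalences; here an equivalence is seen as a
localization at the isomorphisms, along which `CatCenter.localizationRingHom` transports centres.
-/

namespace CategoryTheory

lemma CatCenter.map_app_of_iso_id {C : Type*} [Category C] {Φ : C ⥤ C} (α : 𝟭 C ≅ Φ)
    (r : CatCenter C) (X : C) : Φ.map (r.app X) = r.app (Φ.obj X) := by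
  rw [← cancel_epi (α.hom.app X), ← α.hom.naturality, Functor.id_map, r.naturality]
  rfl

variable {C D : Type*} [Category C] [Category D]

open CatCenter MorphismProperty

instance Functor.isLocalization_isomorphisms_of_isEquivalence (L : C ⥤ D) [L.IsEquivalence] :
    L.IsLocalization (isomorphisms C) :=
  Functor.IsLocalization.of_isEquivalence _ _ le_rfl

namespace Equivalence

lemma localization_inverse_localization_functor (e : C ≌ D) (r : CatCenter C) :
    (r.localization e.functor (isomorphisms C)).localization e.inverse (isomorphisms D) = r := by
  refine ext_of_localization (e.functor ⋙ e.inverse) (isomorphisms C) _ _ fun X => ?_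
  rw [Functor.comp_obj, localization_app, localization_app]
  exact map_app_of_iso_id e.unitIso r X

variable [Preadditive C] [Preadditive D] (e : C ≌ D) [e.functor.Additive]

noncomputable def catCenterRingEquiv : CatCenter C ≃+* CatCenter D :=
  { localizationRingHom e.functor (isomorphisms C) with
    invFun := localizationRingHom e.inverse (isomorphisms D)
    left_inv := e.localization_inverse_localization_functor
    right_inv := e.symm.localization_inverse_localization_functor }

lemma catCenterRingEquiv_app_functor_obj (r : CatCenter C) (X : C) :
    (e.catCenterRingEquiv r).app (e.functor.obj X) = e.functor.map (r.app X) :=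
  localization_app r e.functor (isomorphisms C) X

noncomputable def catCenterAlgEquiv (k : Type*) [CommSemiring k] [Linear k C] [Linear k D]
    [e.functor.Linear k] : CatCenter C ≃ₐ[k] CatCenter D :=
  AlgEquiv.ofRingEquiv (f := e.catCenterRingEquiv) fun c =>
    ext_of_localization e.functor (isomorphisms C) _ _ fun X => by
      rw [catCenterRingEquiv_app_functor_obj]
      exact (e.functor.map_smul c (𝟙 X)).trans (congrArg (c • ·) (e.functor.map_id X))

end Equivalence

end CategoryTheory

namespace ModuleCat

open CategoryTheory

variable (k : Type u) [CommRing k] {A : Type u} [Ring A] [Algebra k A]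

lemma catCenter_app_apply (η : CatCenter (ModuleCat.{u} A)) (M : ModuleCat.{u} A) (m : M) :
    (η.app M).hom m = (η.app (of A A)).hom 1 • m := by
  have h := congrArg (fun f => f.hom (1 : A))
    (η.naturality (ofHom (LinearMap.toSpanSingleton A M m)))
  simpa using h

lemma catCenter_app_one_mem_center (η : CatCenter (ModuleCat.{u} A)) :
    (η.app (of A A)).hom 1 ∈ Subalgebra.center k A := by
  refine Subalgebra.mem_center_iff.mpr fun b => ?_
  have h := catCenter_app_apply η (of A A) b
  rw [← mul_one b, ← smul_eq_mul b 1, (η.app (of A A)).hom.map_smul] at h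
  simpa using h

def centerToCatCenter (z : Subalgebra.center k A) : CatCenter (ModuleCat.{u} A) where
  app M := ofHom
    { toFun := ((z : A) • ·)
      map_add' := smul_add (z : A)
      map_smul' a m := by
        rw [RingHom.id_apply, smul_smul, smul_smul, Subalgebra.mem_center_iff.mp z.2 a] }
  naturality _ _ f := by
    ext m
    exact (f.hom.map_smul (z : A) m).symm

def centerAlgEquivCatCenter : Subalgebra.center k A ≃ₐ[k] CatCenter (ModuleCat.{u} A) where
  toFun := centerToCatCenter k
  invFun η := ⟨(η.app (of A A)).hom 1, catCenter_app_one_mem_center k η⟩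
  left_inv z := Subtype.ext (mul_one (z : A))
  right_inv η := by
    ext M m
    exact (catCenter_app_apply η M m).symm
  map_mul' z w := by
    ext M m
    exact mul_smul (z : A) w m
  map_add' z w := by
    ext M m
    exact add_smul (z : A) w m
  commutes' c := by
    ext M m
    exact algebraMap_smul A c m

end ModuleCat

/-- If `A` and `B` are algebras over a commutative ring `k` which are Morita
equivalent — there is a `k`-linear equivalence between their module categories —
then their centres are isomorphic as `k`-algebras. -/
theorem morita_equivalent_centres_isomorphic (k : Type u) [CommRing k]
    (A B : Type u) [Ring A] [Ring B] [Algebra k A] [Algebra k B]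
    (F : ModuleCat.{u} A ≌ ModuleCat.{u} B)
    [F.functor.Additive] [F.functor.Linear k] :
    Nonempty (↥(Subalgebra.center k A) ≃ₐ[k] ↥(Subalgebra.center k B)) :=
  ⟨(ModuleCat.centerAlgEquivCatCenter k).trans
    ((F.catCenterAlgEquiv k).trans (ModuleCat.centerAlgEquivCatCenter k).symm)⟩
end

section
/- Let p be a prime and m ≥ 1 an integer, and let G = SL(2, GF(p^m)) be the group of 2x2 matrices of determinant 1 over the field with p^m elements. Then any two distinct Sylow p-subgroups of G intersect in the trivial subgroup; that is, G has trivial intersection Sylow p-subgroups. -/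
/-!
If `g ∈ SL(2, K)` fixes a vector `v ≠ 0`, then `det (g - 1) = 0`, which together with
`det g = 1` forces `tr (g - 1) = 0`; by Cayley–Hamilton `(g - 1)² = 0`, so `g ^ p = 1` when
`char K = p`. Hence the stabilizer of `v` is a `p`-group. A Sylow `p`-subgroup acting on `K²`
has a number of fixed points divisible by `p`, so it fixes some `v ≠ 0` besides `0`, and by
maximality it *is* the stabilizer of `v`.
Finally, a nontrivial element fixing both `v` and `w` cannot fix a basis, so `w` is a nonzero
multiple of `v` and the two stabilizers coincide.
-/

open MulAction

namespace Matrix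

lemma mul_self_eq_zero_of_trace_eq_zero_of_det_eq_zero {R : Type*} [CommRing R] [Nontrivial R]
    {M : Matrix (Fin 2) (Fin 2) R} (htr : M.trace = 0) (hdet : M.det = 0) : M * M = 0 := by
  simpa [charpoly_fin_two, htr, hdet, sq] using M.aeval_self_charpoly

namespace SpecialLinearGroup

variable {K : Type*} [Field K]

lemma eq_one_of_forall_smul_basis_eq_self {ι ι' : Type*} [Fintype ι] [DecidableEq ι]
    (b : Module.Basis ι' K (ι → K)) {g : SpecialLinearGroup ι K} (hg : ∀ i, g • b i = b i) :
    g = 1 := by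
  refine Subtype.ext (Matrix.toLin'.injective (b.ext fun i => ?_))
  simpa [SpecialLinearGroup.smul_def] using hg i

lemma sq_sub_one_eq_zero_of_smul_eq_self {g : SpecialLinearGroup (Fin 2) K} {v : Fin 2 → K}
    (hv : v ≠ 0) (hgv : g • v = v) : ((g : Matrix (Fin 2) (Fin 2) K) - 1) ^ 2 = 0 := by
  have hdet : (g.1 - 1).det = 0 := exists_mulVec_eq_zero_iff.mp ⟨v, hv, by
    rw [sub_mulVec, one_mulVec, ← smul_eq_mulVec, ← SpecialLinearGroup.smul_def, hgv, sub_self]⟩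
  have htr : (g.1 - 1).trace = 0 := by
    have hg : g.1.det = 1 := g.2
    rw [det_fin_two] at hg hdet
    rw [trace_fin_two]
    simp only [sub_apply, one_apply_eq, one_apply_ne, ne_eq, zero_ne_one, one_ne_zero,
      not_false_eq_true, sub_zero] at hdet ⊢
    linear_combination hg - hdet
  rw [sq]
  exact mul_self_eq_zero_of_trace_eq_zero_of_det_eq_zero htr hdet

lemma pow_char_eq_one_of_smul_eq_self (p : ℕ) [Fact p.Prime] [CharP K p]
    {g : SpecialLinearGroup (Fin 2) K} {v : Fin 2 → K} (hv : v ≠ 0) (hgv : g • v = v) :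
    g ^ p = 1 := by
  have h := pow_eq_zero_of_le (Fact.out : p.Prime).two_le
    (sq_sub_one_eq_zero_of_smul_eq_self hv hgv)
  rw [sub_pow_char_of_commute _ (Commute.one_right _), one_pow, sub_eq_zero] at h
  exact Subtype.ext (by simpa using h)

lemma isPGroup_stabilizer (p : ℕ) [Fact p.Prime] [CharP K p] {v : Fin 2 → K} (hv : v ≠ 0) :
    IsPGroup p (stabilizer (SpecialLinearGroup (Fin 2) K) v) := fun g =>
  ⟨1, Subtype.ext <| by simpa using pow_char_eq_one_of_smul_eq_self p hv g.2⟩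

lemma stabilizer_eq_of_inf_ne_bot {v w : Fin 2 → K} (hv : v ≠ 0) (hw : w ≠ 0)
    (h : stabilizer (SpecialLinearGroup (Fin 2) K) v ⊓ stabilizer _ w ≠ ⊥) :
    stabilizer (SpecialLinearGroup (Fin 2) K) v = stabilizer _ w := by
  obtain ⟨⟨g, hgv, hgw⟩, hg⟩ := Subgroup.ne_bot_iff_exists_ne_one.mp h
  by_cases hvw : LinearIndependent K ![v, w]
  · have hg1 : g = 1 := eq_one_of_forall_smul_basis_eq_self
      (basisOfLinearIndependentOfCardEqFinrank hvw (by simp)) fun i => by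
        fin_cases i
        · simpa using hgv
        · simpa using hgw
    exact absurd (Subtype.ext hg1) hg
  · obtain ⟨a, rfl⟩ : ∃ a : K, a • v = w := by
      simpa [LinearIndependent.pair_iff' hv] using hvw
    have ha : a ≠ 0 := by
      rintro rfl
      simp at hw
    exact (stabilizer_smul_eq_right (Units.mk0 a ha) v).symm

lemma exists_sylow_eq_stabilizer {p : ℕ} [Fact p.Prime] [Finite K] [CharP K p]
    (P : Sylow p (SpecialLinearGroup (Fin 2) K)) :
    ∃ v : Fin 2 → K, v ≠ 0 ∧ (P : Subgroup (SpecialLinearGroup (Fin 2) K)) = stabilizer _ v := by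
  have hp : p ∣ Nat.card (Fin 2 → K) := by
    rw [CharP.eq (Fin 2 → K) (inferInstance : CharP (Fin 2 → K) p) (CharP.addOrderOf_one _)]
    exact addOrderOf_dvd_natCard 1
  obtain ⟨v, hvP, hv0⟩ := P.isPGroup'.exists_fixed_point_of_prime_dvd_card_of_fixed_point _ hp
    (a := 0) fun _ => smul_zero _
  exact ⟨v, hv0.symm, (P.is_maximal' (isPGroup_stabilizer p hv0.symm) fun g hg => hvP ⟨g, hg⟩).symm⟩

theorem sylow_inf_eq_bot {p : ℕ} [Fact p.Prime] [Finite K] [CharP K p]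
    {P Q : Sylow p (SpecialLinearGroup (Fin 2) K)} (hPQ : P ≠ Q) :
    (P : Subgroup (SpecialLinearGroup (Fin 2) K)) ⊓ Q = ⊥ := by
  obtain ⟨v, hv, hPv⟩ := exists_sylow_eq_stabilizer P
  obtain ⟨w, hw, hQw⟩ := exists_sylow_eq_stabilizer Q
  by_contra h
  rw [hPv, hQw] at h
  exact hPQ (Sylow.ext (hPv.trans ((stabilizer_eq_of_inf_ne_bot hv hw h).trans hQw.symm)))

end SpecialLinearGroup

end Matrix

theorem sl2_sylow_trivial_intersection_general (p m : ℕ) [Fact p.Prime] :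
    ∀ P Q : Sylow p (Matrix.SpecialLinearGroup (Fin 2) (GaloisField p m)),
      P ≠ Q →
        (P : Subgroup (Matrix.SpecialLinearGroup (Fin 2) (GaloisField p m))) ⊓
          (Q : Subgroup (Matrix.SpecialLinearGroup (Fin 2) (GaloisField p m))) = ⊥ :=
  fun _ _ => Matrix.SpecialLinearGroup.sylow_inf_eq_bot

/-- `SL(2, GF(p^m))` has trivial intersection Sylow `p`-subgroups: any two distinct
Sylow `p`-subgroups intersect in the trivial subgroup. -/
theorem sl2_sylow_trivial_intersection (p m : ℕ) [Fact p.Prime] (hm : 1 ≤ m) :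
    ∀ P Q : Sylow p (Matrix.SpecialLinearGroup (Fin 2) (GaloisField p m)),
      P ≠ Q →
        (P : Subgroup (Matrix.SpecialLinearGroup (Fin 2) (GaloisField p m))) ⊓
          (Q : Subgroup (Matrix.SpecialLinearGroup (Fin 2) (GaloisField p m))) = ⊥ :=
  sl2_sylow_trivial_intersection_general p m
end
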